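/- Consider the Ising model on a Galton–Watson tree of depth n with offspring law μ satisfying μ(0)=0, μ(1)<1, mean ν > 1, with i.i.d. Bernoulli(p_n) external field (h_v) on all vertices. Then the expected root log-likelihood ratio satisfies E[r_n(ρ)] ≤ 2β p_n ∑_{k=0}^n (tanh(β) ν)^k. In particular, if tanh(β) ν > 1 then E[r_n(ρ)] ≤ C p_n (ν tanh β)^n, and if tanh(β) ν < 1 then E[r_n(ρ)] ≤ C p_n, for a constant C depending only on β and ν. -/

import Mathlib

open MeasureTheory ProbabilityTheory

noncomputable def gB (β x : ℝ) : ℝ :=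
  Real.log ((Real.exp (2 * β) * Real.exp x + 1) / (Real.exp (2 * β) + Real.exp x))

lemma gB_measurable (β : ℝ) : Measurable (gB β) :=
  Real.measurable_log.comp
    (((measurable_const.mul Real.measurable_exp).add_const 1).div
      (measurable_const.add Real.measurable_exp))

lemma gB_nonneg {β x : ℝ} (hβ : 0 < β) (hx : 0 ≤ x) : 0 ≤ gB β x := by
  have hA : 1 < Real.exp (2 * β) := by
    rw [show (1:ℝ) = Real.exp 0 by simp]
    exact Real.exp_lt_exp.mpr (by linarith)
  have hE : 1 ≤ Real.exp x := Real.one_le_exp hx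
  have hD : 0 < Real.exp (2 * β) + Real.exp x := by positivity
  apply Real.log_nonneg
  rw [le_div_iff₀ hD]
  nlinarith

lemma tanh_eq' (β : ℝ) : Real.tanh β = (Real.exp (2 * β) - 1) / (Real.exp (2 * β) + 1) := by
  have h2 : Real.exp (2 * β) = Real.exp β * Real.exp β := by
    rw [← Real.exp_add]; ring_nf
  have hb := Real.exp_pos β
  rw [Real.tanh_eq_sinh_div_cosh, Real.sinh_eq, Real.cosh_eq, Real.exp_neg, h2]
  field_simp

lemma gB_le {β : ℝ} (hβ : 0 < β) {x : ℝ} (hx : 0 ≤ x) : gB β x ≤ Real.tanh β * x := by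
  set A := Real.exp (2 * β) with hAdef
  have hA : 1 < A := by
    rw [show (1:ℝ) = Real.exp 0 by simp]
    exact Real.exp_lt_exp.mpr (by linarith)
  have hA0 : 0 < A := by linarith
  set t := Real.tanh β with htdef
  have ht : t = (A - 1) / (A + 1) := tanh_eq' β
  set φ : ℝ → ℝ := fun y => t * y - (Real.log (A * Real.exp y + 1) - Real.log (A + Real.exp y))
    with hφdef
  have hderiv : ∀ y : ℝ, HasDerivAt φ
      (t - (A * Real.exp y / (A * Real.exp y + 1) - Real.exp y / (A + Real.exp y))) y := by
    intro y
    have hE := Real.exp_pos y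
    have d1 : HasDerivAt (fun y => A * Real.exp y + 1) (A * Real.exp y) y :=
      ((Real.hasDerivAt_exp y).const_mul A).add_const 1
    have l1 : HasDerivAt (fun y => Real.log (A * Real.exp y + 1))
        (A * Real.exp y / (A * Real.exp y + 1)) y := d1.log (by positivity)
    have d2 : HasDerivAt (fun y => A + Real.exp y) (Real.exp y) y :=
      (Real.hasDerivAt_exp y).const_add A
    have l2 : HasDerivAt (fun y => Real.log (A + Real.exp y)) (Real.exp y / (A + Real.exp y)) y :=
      d2.log (by positivity)
    have lin : HasDerivAt (fun y : ℝ => t * y) t y := by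
      simpa using (hasDerivAt_id y).const_mul t
    exact lin.sub (l1.sub l2)
  have hd_nonneg : ∀ y : ℝ,
      0 ≤ t - (A * Real.exp y / (A * Real.exp y + 1) - Real.exp y / (A + Real.exp y)) := by
    intro y
    have hE : 0 < Real.exp y := Real.exp_pos y
    set E := Real.exp y with hEdef
    have h1 : (0:ℝ) < A * E + 1 := by positivity
    have h2 : (0:ℝ) < A + E := by positivity
    have h3 : (0:ℝ) < A + 1 := by linarith
    rw [sub_nonneg, ht, div_sub_div _ _ (ne_of_gt h1) (ne_of_gt h2),
      div_le_div_iff₀ (by positivity) h3]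
    nlinarith [mul_nonneg (mul_nonneg (by linarith : (0:ℝ) ≤ A - 1) hA0.le) (sq_nonneg (E - 1))]
  have hmono : Monotone φ := by
    apply monotone_of_deriv_nonneg
    · exact fun y => (hderiv y).differentiableAt
    · intro y
      rw [(hderiv y).deriv]
      exact hd_nonneg y
  have h0 : φ 0 = 0 := by
    simp [hφdef, Real.exp_zero, mul_one]
  have hx' : φ 0 ≤ φ x := hmono hx
  rw [h0] at hx'
  have hgb : gB β x = Real.log (A * Real.exp x + 1) - Real.log (A + Real.exp x) := by
    rw [gB, Real.log_div (by positivity) (by positivity)]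
  rw [hgb]
  simp only [hφdef] at hx'
  linarith

lemma meas_comp_nat {Ω : Type} {mΩ : MeasurableSpace Ω} {Y : Ω → ℕ} (hY : Measurable Y)
    {S : ℕ → Ω → ℝ} (hS : ∀ k, Measurable (S k)) : Measurable fun ω => S (Y ω) ω := by
  intro A hA
  have : (fun ω => S (Y ω) ω) ⁻¹' A = ⋃ k, (Y ⁻¹' {k}) ∩ (S k ⁻¹' A) := by
    ext ω
    simp only [Set.mem_preimage, Set.mem_iUnion, Set.mem_inter_iff, Set.mem_singleton_iff]
    constructor
    · intro hω; exact ⟨Y ω, rfl, hω⟩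
    · rintro ⟨k, rfl, hω⟩; exact hω
  rw [this]
  exact MeasurableSet.iUnion fun k => (hY (measurableSet_singleton k)).inter (hS k hA)

lemma sum_range_eq_tsum_ite {M : Type*} [AddCommMonoid M] [TopologicalSpace M] [T2Space M]
    (k : ℕ) (f : ℕ → M) :
    ∑ i ∈ Finset.range k, f i = ∑' i : ℕ, if i < k then f i else 0 := by
  rw [tsum_eq_sum (s := Finset.range k) (fun i hi => by
    simp only [Finset.mem_range] at hi; simp [hi])]
  exact (Finset.sum_congr rfl fun i hi => by simp [Finset.mem_range.mp hi]).symm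

lemma lintegral_nat {Ω : Type} [MeasurableSpace Ω] (P : Measure Ω) {Y : Ω → ℕ}
    (hY : Measurable Y) :
    ∫⁻ ω, (Y ω : ENNReal) ∂P = ∑' i : ℕ, P {ω | i < Y ω} := by
  have hpt : ∀ ω, (Y ω : ENNReal) = ∑' i : ℕ, if i < Y ω then (1 : ENNReal) else 0 := by
    intro ω
    rw [← sum_range_eq_tsum_ite (Y ω) (fun _ => (1 : ENNReal))]
    simp
  have hms : ∀ i : ℕ, MeasurableSet {ω | i < Y ω} := fun i =>
    hY (by trivial : MeasurableSet {m : ℕ | i < m})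
  rw [lintegral_congr hpt, lintegral_tsum (fun i => ?_)]
  · refine tsum_congr fun i => ?_
    have heq : (fun ω => if i < Y ω then (1 : ENNReal) else 0)
        = Set.indicator {ω | i < Y ω} (fun _ => 1) := by
      funext ω; rw [Set.indicator_apply]; rfl
    rw [heq, lintegral_indicator_const (hms i), one_mul]
  · exact (Measurable.ite (hms i) measurable_const measurable_const).aemeasurable

lemma meas_gt {Ω : Type} [MeasurableSpace Ω] (P : Measure Ω) {Y : Ω → ℕ} (hY : Measurable Y)
    (c : ℕ → ENNReal) (hc : ∀ k, P {ω | Y ω = k} = c k) (i : ℕ) :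
    P {ω | i < Y ω} = ∑' k : ℕ, if i < k then c k else 0 := by
  have hset : {ω | i < Y ω} = ⋃ k : ℕ, {ω | Y ω = k ∧ i < k} := by
    ext ω
    simp only [Set.mem_setOf_eq, Set.mem_iUnion]
    exact ⟨fun hω => ⟨Y ω, rfl, hω⟩, fun ⟨k, hk, hik⟩ => hk ▸ hik⟩
  rw [hset, measure_iUnion ?_ ?_]
  · refine tsum_congr fun k => ?_
    by_cases hik : i < k
    · simp only [hik, if_true]
      rw [← hc k]
      congr 1
      ext ω; simp [hik]
    · rw [show {ω | Y ω = k ∧ i < k} = ∅ by ext ω; simp [hik], measure_empty, if_neg hik]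
  · intro k k' hkk'
    simp only [Function.onFun, Set.disjoint_left]
    rintro ω ⟨rfl, -⟩ ⟨h2, -⟩
    exact hkk' h2
  · intro k
    exact hY (by trivial : MeasurableSet {m : ℕ | m = k ∧ i < k})

/-- Upper bound on the expected root log-likelihood ratio for the Ising model on a
Galton–Watson tree of depth `n` (offspring law `μ` with `μ 0 = 0`, `μ 1 < 1`, mean
`ν > 1`) with i.i.d. Bernoulli(`p`) external field on all vertices. The tree and
field are encoded in Ulam–Harris fashion by independent families `X` (offspring
numbers, law `μ`) and `h` (Bernoulli(`p`)), and `r` satisfies Lyons' recursion.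
Then `E[r(ρ)] ≤ 2βp ∑_{k=0}^n (tanh(β) ν)^k`; in particular, if `tanh(β) ν > 1`
then `E[r(ρ)] ≤ C p (ν tanh β)^n`, and if `tanh(β) ν < 1` then `E[r(ρ)] ≤ C p`,
with `C` depending only on `β` and `ν`. -/
theorem stmt19 {Ω : Type} [MeasurableSpace Ω] (P : Measure Ω) [IsProbabilityMeasure P]
    (n : ℕ) (β p : ℝ) (hβ : 0 < β) (hp0 : 0 ≤ p) (hp1 : p ≤ 1)
    (μ : ℕ → ℝ) (hμnn : ∀ k, 0 ≤ μ k) (hμsum : ∑' k, μ k = 1)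
    (hμ0 : μ 0 = 0) (hμ1 : μ 1 < 1)
    (ν : ℝ) (hν : HasSum (fun (k : ℕ) => (k : ℝ) * μ k) ν) (hν1 : 1 < ν)
    (X : List ℕ → Ω → ℕ) (h : List ℕ → Ω → ℕ)
    (hXmeas : ∀ u, Measurable (X u)) (hhmeas : ∀ u, Measurable (h u))
    (hXlaw : ∀ u k, P {ω | X u ω = k} = ENNReal.ofReal (μ k))
    (hhlaw : ∀ u, P {ω | h u ω = 1} = ENNReal.ofReal p ∧
        P {ω | h u ω = 0} = ENNReal.ofReal (1 - p))
    (hindep : iIndepFun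
        (Sum.elim X h) P)
    (r : List ℕ → Ω → ℝ)
    (hr_leaf : ∀ u ω, u.length = n → r u ω = 2 * β * (h u ω : ℝ))
    (hr_int : ∀ u ω, u.length < n →
        r u ω = 2 * β * (h u ω : ℝ) + ∑ i ∈ Finset.range (X u ω),
          Real.log ((Real.exp (2 * β) * Real.exp (r (u ++ [i]) ω) + 1) /
            (Real.exp (2 * β) + Real.exp (r (u ++ [i]) ω))))
    (hrmeas : ∀ u, Measurable (r u))
    (hrint : Integrable (r []) P) :
    (∫ ω, r [] ω ∂P) ≤ 2 * β * p * ∑ k ∈ Finset.range (n + 1), (Real.tanh β * ν) ^ k ∧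
      (1 < Real.tanh β * ν →
        (∫ ω, r [] ω ∂P) ≤
          2 * β * (Real.tanh β * ν) / (Real.tanh β * ν - 1) * p * (ν * Real.tanh β) ^ n) ∧
      (Real.tanh β * ν < 1 →
        (∫ ω, r [] ω ∂P) ≤ 2 * β / (1 - Real.tanh β * ν) * p) := by
  classical
  set a : ℝ := Real.tanh β * ν with ha_def
  have hA1 : 1 < Real.exp (2 * β) := by
    rw [show (1:ℝ) = Real.exp 0 by simp]
    exact Real.exp_lt_exp.mpr (by linarith)
  have htanh_pos : 0 < Real.tanh β := by
    rw [tanh_eq']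
    apply div_pos <;> linarith
  have htanh0 : 0 ≤ Real.tanh β := htanh_pos.le
  have hν0 : 0 ≤ ν := by linarith
  have ha0 : 0 ≤ a := mul_nonneg htanh0 hν0
  have hr_int' : ∀ u ω, u.length < n →
      r u ω = 2 * β * (h u ω : ℝ) + ∑ i ∈ Finset.range (X u ω), gB β (r (u ++ [i]) ω) :=
    hr_int
  -- nonnegativity of r
  have hrpos : ∀ m : ℕ, ∀ u : List ℕ, ∀ ω, u.length + m = n → 0 ≤ r u ω := by
    intro m
    induction m with
    | zero =>
      intro u ω hu
      rw [hr_leaf u ω (by omega)]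
      positivity
    | succ m ih =>
      intro u ω hu
      rw [hr_int' u ω (by omega)]
      have h1 : 0 ≤ 2 * β * (h u ω : ℝ) := by positivity
      refine add_nonneg h1 (Finset.sum_nonneg fun i _ => ?_)
      have hlen' : (u ++ [i]).length + m = n := by
        simp only [List.length_append, List.length_cons, List.length_nil]; omega
      exact gB_nonneg hβ (ih (u ++ [i]) ω hlen')
  -- sub-sigma-algebras indexed by subtrees
  set 𝔪 : (List ℕ ⊕ List ℕ) → MeasurableSpace Ω :=
    fun j => MeasurableSpace.comap (Sum.elim X h j) inferInstance with h𝔪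
  have h𝔪le : ∀ j, 𝔪 j ≤ (inferInstance : MeasurableSpace Ω) := by
    intro j
    cases j with
    | inl u => exact measurable_iff_comap_le.mp (hXmeas u)
    | inr u => exact measurable_iff_comap_le.mp (hhmeas u)
  set Tset : List ℕ → Set (List ℕ ⊕ List ℕ) :=
    fun v => {j | v <+: Sum.elim id id j} with hTset
  set J : List ℕ → MeasurableSpace Ω := fun v => ⨆ j ∈ Tset v, 𝔪 j with hJdef
  have hJle : ∀ v v' : List ℕ, v <+: v' → J v' ≤ J v := by
    intro v v' hvv'
    exact biSup_mono fun j hj => hvv'.trans hj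
  have hXJ : ∀ v, Measurable[J v] (X v) := by
    intro v
    exact Measurable.of_comap_le
      (le_biSup 𝔪 (show Sum.inl v ∈ Tset v from List.prefix_refl v))
  have hhJ : ∀ v, Measurable[J v] (h v) := by
    intro v
    exact Measurable.of_comap_le
      (le_biSup 𝔪 (show Sum.inr v ∈ Tset v from List.prefix_refl v))
  have hrJ : ∀ m : ℕ, ∀ v : List ℕ, v.length + m = n → Measurable[J v] (r v) := by
    intro m
    induction m with
    | zero =>
      intro v hv
      have hrw : r v = fun ω => 2 * β * (h v ω : ℝ) := funext fun ω => hr_leaf v ω (by omega)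
      rw [hrw]
      exact meas_comp_nat (S := fun k _ => 2 * β * (k : ℝ)) (hhJ v) (fun k => measurable_const)
    | succ m ih =>
      intro v hv
      have hlen : v.length < n := by omega
      have hS : ∀ k : ℕ, Measurable[J v] fun ω => ∑ i ∈ Finset.range k, gB β (r (v ++ [i]) ω) := by
        intro k
        apply Finset.measurable_sum
        intro i _
        have hlen' : (v ++ [i]).length + m = n := by
          simp only [List.length_append, List.length_cons, List.length_nil]; omega
        have hchild : Measurable[J (v ++ [i])] (r (v ++ [i])) := ih (v ++ [i]) hlen'
        exact (gB_measurable β).comp (hchild.mono (hJle v (v ++ [i]) ⟨[i], rfl⟩) le_rfl)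
      have hsum : Measurable[J v] fun ω => ∑ i ∈ Finset.range (X v ω), gB β (r (v ++ [i]) ω) :=
        meas_comp_nat (hXJ v) hS
      have hfield : Measurable[J v] fun ω => 2 * β * (h v ω : ℝ) :=
        meas_comp_nat (S := fun k _ => 2 * β * (k : ℝ)) (hhJ v) (fun k => measurable_const)
      have hrw : r v = fun ω =>
          2 * β * (h v ω : ℝ) + ∑ i ∈ Finset.range (X v ω), gB β (r (v ++ [i]) ω) :=
        funext fun ω => hr_int' v ω hlen
      rw [hrw]
      exact hfield.add hsum
  have hIndep : ∀ u : List ℕ, ∀ i : ℕ, u.length < n → IndepFun (X u) (r (u ++ [i])) P := by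
    intro u i hu
    have hdisj : Disjoint ({Sum.inl u} : Set (List ℕ ⊕ List ℕ)) (Tset (u ++ [i])) := by
      rw [Set.disjoint_left]
      intro j hj1 hj2
      rw [Set.mem_singleton_iff] at hj1
      subst hj1
      have hl := List.IsPrefix.length_le hj2
      simp only [Sum.elim_inl, id_eq, List.length_append, List.length_cons,
        List.length_nil] at hl
      omega
    have hiI : iIndep 𝔪 P := hindep
    have hind := indep_iSup_of_disjoint h𝔪le hiI hdisj
    have h1 : 𝔪 (Sum.inl u)
        ≤ ⨆ j ∈ ({Sum.inl u} : Set (List ℕ ⊕ List ℕ)), 𝔪 j :=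
      le_biSup 𝔪 (Set.mem_singleton (Sum.inl u))
    have h2 : MeasurableSpace.comap (r (u ++ [i])) inferInstance ≤ ⨆ j ∈ Tset (u ++ [i]), 𝔪 j := by
      have hlen' : (u ++ [i]).length + (n - (u.length + 1)) = n := by
        simp only [List.length_append, List.length_cons, List.length_nil]; omega
      exact measurable_iff_comap_le.mp (hrJ _ (u ++ [i]) hlen')
    exact indep_of_indep_of_le_right (indep_of_indep_of_le_left hind h1) h2
  -- expectation of the offspring and field variables
  have hEX : ∀ u : List ℕ, ∑' i : ℕ, P {ω | i < X u ω} = ENNReal.ofReal ν := by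
    intro u
    have h1 : ∀ i : ℕ, P {ω | i < X u ω}
        = ∑' k : ℕ, if i < k then ENNReal.ofReal (μ k) else 0 :=
      meas_gt P (hXmeas u) _ (hXlaw u)
    calc ∑' i : ℕ, P {ω | i < X u ω}
        = ∑' (i : ℕ) (k : ℕ), if i < k then ENNReal.ofReal (μ k) else 0 := tsum_congr h1
      _ = ∑' (k : ℕ) (i : ℕ), if i < k then ENNReal.ofReal (μ k) else 0 := ENNReal.tsum_comm
      _ = ∑' (k : ℕ), (k : ENNReal) * ENNReal.ofReal (μ k) := by
          refine tsum_congr fun k => ?_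
          rw [← sum_range_eq_tsum_ite k (fun _ => ENNReal.ofReal (μ k))]
          simp [Finset.sum_const, Finset.card_range, nsmul_eq_mul]
      _ = ∑' (k : ℕ), ENNReal.ofReal ((k : ℝ) * μ k) := by
          refine tsum_congr fun k => ?_
          rw [ENNReal.ofReal_mul (Nat.cast_nonneg k), ENNReal.ofReal_natCast]
      _ = ENNReal.ofReal ν := by
          rw [← ENNReal.ofReal_tsum_of_nonneg
            (fun k => mul_nonneg (Nat.cast_nonneg k) (hμnn k)) hν.summable, hν.tsum_eq]
  have hEh : ∀ u : List ℕ, ∑' i : ℕ, P {ω | i < h u ω} = ENNReal.ofReal p := by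
    intro u
    obtain ⟨hp1law, hp0law⟩ := hhlaw u
    have hmeas0 : MeasurableSet {ω | h u ω = 0} :=
      hhmeas u (by trivial : MeasurableSet {m : ℕ | m = 0})
    have hmeas1 : MeasurableSet {ω | h u ω = 1} :=
      hhmeas u (by trivial : MeasurableSet {m : ℕ | m = 1})
    have hunion : P ({ω | h u ω = 0} ∪ {ω | h u ω = 1}) = 1 := by
      rw [measure_union ?_ hmeas1, hp0law, hp1law, ← ENNReal.ofReal_add (by linarith) hp0]
      · norm_num
      · rw [Set.disjoint_left]
        intro ω h0 h1
        simp only [Set.mem_setOf_eq] at h0 h1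
        omega
    have hnull : P (({ω | h u ω = 0} ∪ {ω | h u ω = 1})ᶜ) = 0 := by
      rw [measure_compl (hmeas0.union hmeas1) (measure_ne_top P _), hunion, measure_univ,
        tsub_self]
    have hgt0 : ∀ i : ℕ, 1 ≤ i → P {ω | i < h u ω} = 0 := by
      intro i hi
      apply measure_mono_null ?_ hnull
      intro ω hω
      simp only [Set.mem_setOf_eq, Set.mem_compl_iff, Set.mem_union] at *
      omega
    have h0 : P {ω | 0 < h u ω} = ENNReal.ofReal p := by
      apply le_antisymm
      · calc P {ω | 0 < h u ω}
            ≤ P ({ω | h u ω = 1} ∪ ({ω | h u ω = 0} ∪ {ω | h u ω = 1})ᶜ) := by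
              apply measure_mono
              intro ω hω
              simp only [Set.mem_setOf_eq, Set.mem_union, Set.mem_compl_iff] at *
              omega
          _ ≤ P {ω | h u ω = 1} + P (({ω | h u ω = 0} ∪ {ω | h u ω = 1})ᶜ) :=
              measure_union_le _ _
          _ = ENNReal.ofReal p := by rw [hp1law, hnull, add_zero]
      · rw [← hp1law]
        apply measure_mono
        intro ω hω
        simp only [Set.mem_setOf_eq] at *
        omega
    rw [tsum_eq_single 0 ?_]
    · exact h0
    · intro i hi
      exact hgt0 i (Nat.one_le_iff_ne_zero.mpr hi)
  have hcastmeas : Measurable (fun k : ℕ => (k : ENNReal)) := measurable_of_countable _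
  have hfirst : ∀ u : List ℕ,
      ∫⁻ ω, ENNReal.ofReal (2 * β * (h u ω : ℝ)) ∂P = ENNReal.ofReal (2 * β * p) := by
    intro u
    have hpt : ∀ ω, ENNReal.ofReal (2 * β * (h u ω : ℝ))
        = ENNReal.ofReal (2 * β) * (h u ω : ENNReal) := by
      intro ω
      rw [ENNReal.ofReal_mul (by positivity), ENNReal.ofReal_natCast]
    have hm : Measurable fun ω => ((h u ω : ENNReal)) := hcastmeas.comp (hhmeas u)
    rw [lintegral_congr hpt, lintegral_const_mul _ hm,
      lintegral_nat P (hhmeas u), hEh u, ← ENNReal.ofReal_mul (by positivity)]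
  -- Wald-type bound
  have gmeas : ∀ v : List ℕ, Measurable fun ω => ENNReal.ofReal (gB β (r v ω)) :=
    fun v => ENNReal.measurable_ofReal.comp ((gB_measurable β).comp (hrmeas v))
  have hWald : ∀ u : List ℕ, u.length < n → ∀ B : ENNReal,
      (∀ i : ℕ, ∫⁻ ω, ENNReal.ofReal (gB β (r (u ++ [i]) ω)) ∂P ≤ B) →
      ∫⁻ ω, ∑ i ∈ Finset.range (X u ω), ENNReal.ofReal (gB β (r (u ++ [i]) ω)) ∂P
        ≤ ENNReal.ofReal ν * B := by
    intro u hu B hB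
    have hpt : ∀ ω, ∑ i ∈ Finset.range (X u ω), ENNReal.ofReal (gB β (r (u ++ [i]) ω))
        = ∑' i : ℕ, (if i < X u ω then (1:ENNReal) else 0)
            * ENNReal.ofReal (gB β (r (u ++ [i]) ω)) := by
      intro ω
      rw [sum_range_eq_tsum_ite (X u ω) (fun i => ENNReal.ofReal (gB β (r (u ++ [i]) ω)))]
      refine tsum_congr fun i => ?_
      by_cases hi : i < X u ω <;> simp [hi]
    have hmsX : ∀ i : ℕ, MeasurableSet {ω | i < X u ω} :=
      fun i => hXmeas u (by trivial : MeasurableSet {m : ℕ | i < m})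
    have hmeasi : ∀ i : ℕ, Measurable fun ω => (if i < X u ω then (1:ENNReal) else 0) :=
      fun i => Measurable.ite (hmsX i) measurable_const measurable_const
    rw [lintegral_congr hpt, lintegral_tsum (f := fun i ω => (if i < X u ω then (1:ENNReal) else 0)
        * ENNReal.ofReal (gB β (r (u ++ [i]) ω)))
      (fun i => ((hmeasi i).mul (gmeas _)).aemeasurable)]
    have hprod : ∀ i : ℕ,
        ∫⁻ ω, (if i < X u ω then (1:ENNReal) else 0)
          * ENNReal.ofReal (gB β (r (u ++ [i]) ω)) ∂P
        = P {ω | i < X u ω} * ∫⁻ ω, ENNReal.ofReal (gB β (r (u ++ [i]) ω)) ∂P := by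
      intro i
      have hind : IndepFun (fun ω => (if i < X u ω then (1:ENNReal) else 0))
          (fun ω => ENNReal.ofReal (gB β (r (u ++ [i]) ω))) P := by
        exact (hIndep u i hu).comp
          (φ := fun k : ℕ => if i < k then (1:ENNReal) else 0)
          (ψ := fun x : ℝ => ENNReal.ofReal (gB β x))
          (measurable_of_countable _)
          (ENNReal.measurable_ofReal.comp (gB_measurable β))
      rw [lintegral_mul_eq_lintegral_mul_lintegral_of_indepFun'' (hmeasi i).aemeasurable
        (gmeas _).aemeasurable hind]
      congr 1
      have heq : (fun ω => if i < X u ω then (1:ENNReal) else 0)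
          = Set.indicator {ω | i < X u ω} (fun _ => 1) := by
        funext ω; rw [Set.indicator_apply]; rfl
      rw [heq, lintegral_indicator_const (hmsX i), one_mul]
    calc ∑' i : ℕ, ∫⁻ ω, (if i < X u ω then (1:ENNReal) else 0)
            * ENNReal.ofReal (gB β (r (u ++ [i]) ω)) ∂P
        = ∑' i : ℕ, P {ω | i < X u ω} * ∫⁻ ω, ENNReal.ofReal (gB β (r (u ++ [i]) ω)) ∂P :=
          tsum_congr hprod
      _ ≤ ∑' i : ℕ, P {ω | i < X u ω} * B :=
          Summable.tsum_le_tsum (fun i => mul_le_mul_right (hB i) _) ENNReal.summable ENNReal.summable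
      _ = (∑' i : ℕ, P {ω | i < X u ω}) * B := ENNReal.tsum_mul_right
      _ = ENNReal.ofReal ν * B := by rw [hEX u]
  -- main induction
  have hmain : ∀ m : ℕ, ∀ u : List ℕ, u.length + m = n →
      ∫⁻ ω, ENNReal.ofReal (r u ω) ∂P
        ≤ ENNReal.ofReal (2 * β * p) * ∑ k ∈ Finset.range (m + 1), ENNReal.ofReal a ^ k := by
    intro m
    induction m with
    | zero =>
      intro u hu
      have hpt : ∀ ω, ENNReal.ofReal (r u ω) = ENNReal.ofReal (2 * β * (h u ω : ℝ)) := by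
        intro ω; rw [hr_leaf u ω (by omega)]
      rw [lintegral_congr hpt, hfirst u]
      simp
    | succ m ih =>
      intro u hu
      have hlen : u.length < n := by omega
      have hchildlen : ∀ i : ℕ, (u ++ [i]).length + m = n := by
        intro i
        simp only [List.length_append, List.length_cons, List.length_nil]; omega
      have hpt : ∀ ω, ENNReal.ofReal (r u ω)
          = ENNReal.ofReal (2 * β * (h u ω : ℝ))
            + ∑ i ∈ Finset.range (X u ω), ENNReal.ofReal (gB β (r (u ++ [i]) ω)) := by
        intro ω
        have hgnn : ∀ i ∈ Finset.range (X u ω), 0 ≤ gB β (r (u ++ [i]) ω) :=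
          fun i _ => gB_nonneg hβ (hrpos m (u ++ [i]) ω (hchildlen i))
        rw [hr_int' u ω hlen,
          ENNReal.ofReal_add (by positivity) (Finset.sum_nonneg hgnn),
          ENNReal.ofReal_sum_of_nonneg hgnn]
      have hmeas1 : Measurable fun ω => ENNReal.ofReal (2 * β * (h u ω : ℝ)) :=
        ENNReal.measurable_ofReal.comp
          (measurable_const.mul ((measurable_of_countable (fun k : ℕ => (k : ℝ))).comp
            (hhmeas u)))
      rw [lintegral_congr hpt, lintegral_add_left hmeas1, hfirst u]
      set q : ENNReal := ENNReal.ofReal a with hq_def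
      set Sm : ENNReal := ∑ k ∈ Finset.range (m + 1), q ^ k with hSm_def
      have hBi : ∀ i : ℕ, ∫⁻ ω, ENNReal.ofReal (gB β (r (u ++ [i]) ω)) ∂P
          ≤ ENNReal.ofReal (Real.tanh β) * (ENNReal.ofReal (2 * β * p) * Sm) := by
        intro i
        have step1 : ∫⁻ ω, ENNReal.ofReal (gB β (r (u ++ [i]) ω)) ∂P
            ≤ ∫⁻ ω, ENNReal.ofReal (Real.tanh β) * ENNReal.ofReal (r (u ++ [i]) ω) ∂P := by
          refine lintegral_mono fun ω => ?_
          calc ENNReal.ofReal (gB β (r (u ++ [i]) ω))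
              ≤ ENNReal.ofReal (Real.tanh β * r (u ++ [i]) ω) :=
                ENNReal.ofReal_le_ofReal (gB_le hβ (hrpos m (u ++ [i]) ω (hchildlen i)))
            _ = ENNReal.ofReal (Real.tanh β) * ENNReal.ofReal (r (u ++ [i]) ω) :=
                ENNReal.ofReal_mul htanh0
        have step2 : ∫⁻ ω, ENNReal.ofReal (Real.tanh β) * ENNReal.ofReal (r (u ++ [i]) ω) ∂P
            = ENNReal.ofReal (Real.tanh β) * ∫⁻ ω, ENNReal.ofReal (r (u ++ [i]) ω) ∂P := by
          have hm2 : Measurable fun ω => ENNReal.ofReal (r (u ++ [i]) ω) :=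
            ENNReal.measurable_ofReal.comp (hrmeas _)
          exact lintegral_const_mul _ hm2
        calc ∫⁻ ω, ENNReal.ofReal (gB β (r (u ++ [i]) ω)) ∂P
            ≤ ∫⁻ ω, ENNReal.ofReal (Real.tanh β) * ENNReal.ofReal (r (u ++ [i]) ω) ∂P := step1
          _ = ENNReal.ofReal (Real.tanh β) * ∫⁻ ω, ENNReal.ofReal (r (u ++ [i]) ω) ∂P := step2
          _ ≤ ENNReal.ofReal (Real.tanh β) * (ENNReal.ofReal (2 * β * p) * Sm) :=
              mul_le_mul_right (ih (u ++ [i]) (hchildlen i)) _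
      have hW := hWald u hlen _ hBi
      have hcomb : ENNReal.ofReal ν
            * (ENNReal.ofReal (Real.tanh β) * (ENNReal.ofReal (2 * β * p) * Sm))
          = ENNReal.ofReal (2 * β * p) * (q * Sm) := by
        rw [hq_def, ha_def, ENNReal.ofReal_mul htanh0]
        ring
      have hgeom : ∑ k ∈ Finset.range (m + 1 + 1), q ^ k = q * Sm + 1 := by
        rw [geom_sum_succ]
      rw [hgeom]
      calc ENNReal.ofReal (2 * β * p)
            + ∫⁻ ω, ∑ i ∈ Finset.range (X u ω), ENNReal.ofReal (gB β (r (u ++ [i]) ω)) ∂P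
          ≤ ENNReal.ofReal (2 * β * p)
            + ENNReal.ofReal ν
              * (ENNReal.ofReal (Real.tanh β) * (ENNReal.ofReal (2 * β * p) * Sm)) :=
            add_le_add_right hW _
        _ = ENNReal.ofReal (2 * β * p) * (q * Sm + 1) := by rw [hcomb]; ring
  -- conclusion
  have hbound := hmain n ([] : List ℕ) (by simp)
  have hr0 : 0 ≤ᵐ[P] r [] := Filter.Eventually.of_forall (fun ω => hrpos n ([] : List ℕ) ω (by simp))
  have hint_eq : ∫ ω, r [] ω ∂P = (∫⁻ ω, ENNReal.ofReal (r [] ω) ∂P).toReal :=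
    integral_eq_lintegral_of_nonneg_ae hr0 hrint.aestronglyMeasurable
  have h2βp : 0 ≤ 2 * β * p := by positivity
  have hS_fin : (ENNReal.ofReal (2 * β * p)
      * ∑ k ∈ Finset.range (n + 1), ENNReal.ofReal a ^ k) ≠ ⊤ := by
    refine ENNReal.mul_ne_top ENNReal.ofReal_ne_top ?_
    refine (ENNReal.sum_lt_top.mpr fun k _ => ?_).ne
    exact ENNReal.pow_lt_top ENNReal.ofReal_lt_top
  have hmain1 : (∫ ω, r [] ω ∂P) ≤ 2 * β * p * ∑ k ∈ Finset.range (n + 1), a ^ k := by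
    rw [hint_eq]
    calc (∫⁻ ω, ENNReal.ofReal (r [] ω) ∂P).toReal
        ≤ (ENNReal.ofReal (2 * β * p) * ∑ k ∈ Finset.range (n + 1),
            ENNReal.ofReal a ^ k).toReal := ENNReal.toReal_mono hS_fin hbound
      _ = 2 * β * p * ∑ k ∈ Finset.range (n + 1), a ^ k := by
          rw [ENNReal.toReal_mul, ENNReal.toReal_ofReal h2βp,
            ENNReal.toReal_sum (fun k _ => (ENNReal.pow_lt_top ENNReal.ofReal_lt_top).ne)]
          congr 1
          refine Finset.sum_congr rfl fun k _ => ?_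
          rw [ENNReal.toReal_pow, ENNReal.toReal_ofReal ha0]
  refine ⟨hmain1, ?_, ?_⟩
  · intro ha1
    have ha1' : a ≠ 1 := ne_of_gt ha1
    have hgs : ∑ k ∈ Finset.range (n + 1), a ^ k = (a ^ (n + 1) - 1) / (a - 1) :=
      geom_sum_eq ha1' (n + 1)
    have hstep : 2 * β * p * ∑ k ∈ Finset.range (n + 1), a ^ k
        ≤ 2 * β * a / (a - 1) * p * (ν * Real.tanh β) ^ n := by
      have hpow : (ν * Real.tanh β) ^ n = a ^ n := by rw [ha_def, mul_comm]
      rw [hgs, hpow]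
      have ha1pos : 0 < a - 1 := by linarith
      have h1 : (a ^ (n + 1) - 1) / (a - 1) ≤ a ^ (n + 1) / (a - 1) := by
        gcongr <;> linarith
      have h2 : 2 * β * p * ((a ^ (n + 1) - 1) / (a - 1)) ≤ 2 * β * p * (a ^ (n + 1) / (a - 1)) :=
        mul_le_mul_of_nonneg_left h1 h2βp
      have h3 : 2 * β * p * (a ^ (n + 1) / (a - 1)) = 2 * β * a / (a - 1) * p * a ^ n := by
        field_simp
        ring
      linarith
    linarith
  · intro ha1
    have ha1' : a ≠ 1 := ne_of_lt ha1
    have hgs : ∑ k ∈ Finset.range (n + 1), a ^ k = (a ^ (n + 1) - 1) / (a - 1) :=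
      geom_sum_eq ha1' (n + 1)
    have hstep : 2 * β * p * ∑ k ∈ Finset.range (n + 1), a ^ k ≤ 2 * β / (1 - a) * p := by
      have h1a : 0 < 1 - a := by linarith
      have hgs' : ∑ k ∈ Finset.range (n + 1), a ^ k = (1 - a ^ (n + 1)) / (1 - a) := by
        rw [hgs]
        rw [div_eq_div_iff (by linarith) (by linarith)]
        ring
      have hpow0 : 0 ≤ a ^ (n + 1) := pow_nonneg ha0 _
      have h1 : (1 - a ^ (n + 1)) / (1 - a) ≤ 1 / (1 - a) := by
        gcongr <;> linarith
      have h2 : 2 * β * p * ((1 - a ^ (n + 1)) / (1 - a)) ≤ 2 * β * p * (1 / (1 - a)) :=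
        mul_le_mul_of_nonneg_left h1 h2βp
      have h3 : 2 * β * p * (1 / (1 - a)) = 2 * β / (1 - a) * p := by
        field_simp
      rw [hgs']
      linarith
    linarith
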